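/- Let A and N be positive integers, let α = Σ_{n=1}^{∞} 1/(2^{2ⁿ−1}·A^{2ⁿ}), and let p/q = Σ_{n=1}^{N} 1/(2^{2ⁿ−1}·A^{2ⁿ}) with q = 2^{2ᴺ−1}·A^{2ᴺ}. Then p/q is a convergent of α. -/

import Mathlib

open GenContFract

/-- `x` is a convergent of the simple continued fraction expansion of `α`. -/
def Real.IsConvergentOf (α x : ℝ) : Prop :=
  ∃ n : ℕ, (GenContFract.of α).convs n = x

/-- `x` is a nearest mediant of `α`: a mediant `(b·pₙ + pₙ₋₁)/(b·qₙ + qₙ₋₁)` with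
`b` an integer, `1 ≤ b ≤ a_{n+1} - 1`, and moreover `b = 1` or `b = a_{n+1} - 1`.
Here `pₖ/qₖ` are the convergents of `α` and `a_{n+1}` is the `(n+1)`-st partial
quotient of `α` (which must exist). -/
def Real.IsNearestMediantOf (α x : ℝ) : Prop :=
  ∃ (n : ℕ) (b : ℤ) (a : ℝ),
    (GenContFract.of α).partDens.get? n = some a ∧
    1 ≤ b ∧ (b : ℝ) ≤ a - 1 ∧ ((b : ℝ) = 1 ∨ (b : ℝ) = a - 1) ∧
    x = ((b : ℝ) * ((GenContFract.of α).contsAux (n + 1)).a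
          + ((GenContFract.of α).contsAux n).a) /
        ((b : ℝ) * ((GenContFract.of α).contsAux (n + 1)).b
          + ((GenContFract.of α).contsAux n).b)

/-- `x` is a first mediant of `α`: a mediant `(b·pₙ + pₙ₋₁)/(b·qₙ + qₙ₋₁)` with `b = 1`,
where `1 ≤ a_{n+1} - 1`. -/
def Real.IsFirstMediantOf (α x : ℝ) : Prop :=
  ∃ (n : ℕ) (a : ℝ),
    (GenContFract.of α).partDens.get? n = some a ∧
    (1 : ℝ) ≤ a - 1 ∧
    x = (((GenContFract.of α).contsAux (n + 1)).a + ((GenContFract.of α).contsAux n).a) /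
        (((GenContFract.of α).contsAux (n + 1)).b + ((GenContFract.of α).contsAux n).b)

/-- The value of the finite simple continued fraction `[a; l₀, l₁, …]`. -/
noncomputable def cfVal : ℤ → List ℤ → ℝ
  | a, [] => (a : ℝ)
  | a, x :: xs => (a : ℝ) + 1 / cfVal x xs

lemma cfVal_nil (a : ℤ) : cfVal a [] = a := rfl
lemma cfVal_cons (a x : ℤ) (xs : List ℤ) : cfVal a (x :: xs) = a + 1 / cfVal x xs := rfl

lemma cfVal_ge_one : ∀ (l : List ℤ) (a : ℤ), 1 ≤ a → (∀ x ∈ l, 1 ≤ x) → (1:ℝ) ≤ cfVal a l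
  | [], a, ha, _ => by rw [cfVal_nil]; exact_mod_cast ha
  | x :: xs, a, ha, hl => by
    have hx : (1:ℝ) ≤ cfVal x xs :=
      cfVal_ge_one xs x (hl x (by simp)) (fun y hy => hl y (by simp [hy]))
    have : 0 < 1 / cfVal x xs := by positivity
    rw [cfVal_cons]
    have : (1:ℝ) ≤ (a:ℝ) := by exact_mod_cast ha
    nlinarith [cfVal_ge_one xs x (hl x (by simp)) (fun y hy => hl y (by simp [hy]))]

lemma cfVal_gt_one (a x : ℤ) (xs : List ℤ) (ha : 1 ≤ a) (hl : ∀ y ∈ x :: xs, 1 ≤ y) :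
    (1:ℝ) < cfVal a (x :: xs) := by
  have hx : (1:ℝ) ≤ cfVal x xs :=
    cfVal_ge_one xs x (hl x (by simp)) (fun y hy => hl y (by simp [hy]))
  have h1 : 0 < 1 / cfVal x xs := by positivity
  have h2 : (1:ℝ) ≤ (a:ℝ) := by exact_mod_cast ha
  rw [cfVal_cons]; linarith

/-- Interval criterion: if `α` lies strictly between `[a;l]` and `[a;l++[1]]`
then `[a;l]` is a convergent of `α`. -/
lemma lemC : ∀ (l : List ℤ) (a : ℤ) (α : ℝ), (∀ x ∈ l, 1 ≤ x) →
    ((cfVal a l < α ∧ α < cfVal a (l ++ [1])) ∨ (cfVal a (l ++ [1]) < α ∧ α < cfVal a l)) →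
    (GenContFract.of α).convs l.length = cfVal a l
  | [], a, α, _, hb => by
    have h1 : cfVal a ([] : List ℤ) = (a:ℝ) := rfl
    have h2 : cfVal a ([(1:ℤ)]) = (a:ℝ) + 1 := by
      rw [cfVal_cons, cfVal_nil]; norm_num
    have hαa : (a:ℝ) < α ∧ α < a + 1 := by
      rcases hb with ⟨hl, hr⟩ | ⟨hl, hr⟩
      · rw [h1] at hl; rw [List.nil_append, h2] at hr; exact ⟨hl, hr⟩
      · rw [h1] at hr; rw [List.nil_append, h2] at hl; exfalso; linarith
    have hfl : ⌊α⌋ = a := by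
      rw [Int.floor_eq_iff]; constructor <;> [exact le_of_lt hαa.1; exact_mod_cast hαa.2]
    simp only [List.length_nil, GenContFract.zeroth_conv_eq_h, GenContFract.of_h_eq_floor, hfl, h1]
  | x :: xs, a, α, hl, hb => by
    have hxs : ∀ y ∈ xs, 1 ≤ y := fun y hy => hl y (by simp [hy])
    have hx1 : (1:ℤ) ≤ x := hl x (by simp)
    have hu : (1:ℝ) ≤ cfVal x xs := cfVal_ge_one xs x hx1 hxs
    have hw : (1:ℝ) < cfVal x (xs ++ [1]) := by
      rcases xs with _ | ⟨y, ys⟩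
      · simpa using cfVal_gt_one x 1 [] hx1 (by intro y hy; simp at hy; omega)
      · exact cfVal_gt_one x y (ys ++ [1]) hx1 (by
          intro z hz
          simp only [List.mem_cons, List.mem_append, List.mem_singleton] at hz
          rcases hz with rfl | hz | hz
          · exact hxs _ List.mem_cons_self
          · exact hxs z (by simp [hz])
          · rcases hz with rfl | hz
            · exact le_refl 1
            · simp at hz)
    have hu0 : (0:ℝ) < cfVal x xs := lt_of_lt_of_le one_pos hu
    have hw0 : (0:ℝ) < cfVal x (xs ++ [1]) := lt_trans one_pos hw
    have e1 : cfVal a (x :: xs) = (a:ℝ) + 1 / cfVal x xs := rfl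
    have e2 : cfVal a ((x :: xs) ++ [1]) = (a:ℝ) + 1 / cfVal x (xs ++ [1]) := rfl
    rw [e1, e2] at hb
    have hs0 : 0 < α - (a:ℝ) := by
      rcases hb with ⟨h1, h2⟩ | ⟨h1, h2⟩
      · have : 0 < 1 / cfVal x xs := by positivity
        linarith
      · have : 0 < 1 / cfVal x (xs ++ [1]) := by positivity
        linarith
    have hs1 : α - (a:ℝ) < 1 := by
      rcases hb with ⟨h1, h2⟩ | ⟨h1, h2⟩
      · have : 1 / cfVal x (xs ++ [1]) < 1 := by
          rw [div_lt_one hw0]; exact hw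
        linarith
      · have : 1 / cfVal x xs ≤ 1 := by
          rw [div_le_one hu0]; exact hu
        linarith
    set β := (α - (a:ℝ))⁻¹ with hβ_def
    have hβb : (cfVal x xs < β ∧ β < cfVal x (xs ++ [1])) ∨
        (cfVal x (xs ++ [1]) < β ∧ β < cfVal x xs) := by
      rcases hb with ⟨h1, h2⟩ | ⟨h1, h2⟩
      · right
        constructor
        · have := inv_strictAnti₀ hs0 (by linarith : α - (a:ℝ) < 1 / cfVal x (xs ++ [1]))
          simpa [one_div] using this
        · have := inv_strictAnti₀ (by positivity : (0:ℝ) < 1 / cfVal x xs)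
            (by linarith : 1 / cfVal x xs < α - (a:ℝ))
          simpa [one_div] using this
      · left
        constructor
        · have := inv_strictAnti₀ hs0 (by linarith : α - (a:ℝ) < 1 / cfVal x xs)
          simpa [one_div] using this
        · have := inv_strictAnti₀ (by positivity : (0:ℝ) < 1 / cfVal x (xs ++ [1]))
            (by linarith : 1 / cfVal x (xs ++ [1]) < α - (a:ℝ))
          simpa [one_div] using this
    have IH := lemC xs x β hxs hβb
    have hfl : ⌊α⌋ = a := by
      rw [Int.floor_eq_iff]
      constructor
      · linarith
      · push_cast; linarith
    have hfract : Int.fract α = α - (a:ℝ) := by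
      rw [Int.fract, hfl]
    have hinv : (Int.fract α)⁻¹ = β := by rw [hfract]
    rw [List.length_cons, GenContFract.convs_succ, hinv, IH, hfl, e1]

/-- `cfM l = (d, d', n, n')`: the matrix `∏ (aᵢ 1; 1 0)` over `l`, so that
`cfVal a l = (a*d + n)/d` and `cfVal 0 l = n/d`. -/
def cfM : List ℤ → ℤ × ℤ × ℤ × ℤ
  | [] => (1, 0, 0, 1)
  | a :: l =>
    let M := cfM l
    (a * M.1 + M.2.2.1, a * M.2.1 + M.2.2.2, M.1, M.2.1)

lemma cfM_pos : ∀ l : List ℤ, (∀ x ∈ l, 1 ≤ x) →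
    1 ≤ (cfM l).1 ∧ 0 ≤ (cfM l).2.1 ∧ 0 ≤ (cfM l).2.2.1 ∧ 0 ≤ (cfM l).2.2.2
  | [], _ => by simp [cfM]
  | x :: xs, hl => by
    obtain ⟨h1, h2, h3, h4⟩ := cfM_pos xs (fun y hy => hl y (by simp [hy]))
    have hx : 1 ≤ x := hl x (by simp)
    simp only [cfM]
    refine ⟨?_, ?_, ?_, h2⟩ <;> nlinarith

lemma cfM_det : ∀ l : List ℤ,
    (cfM l).1 * (cfM l).2.2.2 - (cfM l).2.1 * (cfM l).2.2.1 = (-1) ^ l.length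
  | [] => by simp [cfM]
  | x :: xs => by
    have h := cfM_det xs
    simp only [cfM, List.length_cons, pow_succ]
    nlinarith [h]

lemma cfVal_eq : ∀ (l : List ℤ) (a : ℤ), (∀ x ∈ l, 1 ≤ x) →
    cfVal a l = ((a:ℝ) * ((cfM l).1 : ℝ) + ((cfM l).2.2.1 : ℝ)) / ((cfM l).1 : ℝ)
  | [], a, _ => by simp [cfM, cfVal_nil]
  | x :: xs, a, hl => by
    have hxs : ∀ y ∈ xs, 1 ≤ y := fun y hy => hl y (by simp [hy])
    have hx : 1 ≤ x := hl x (by simp)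
    obtain ⟨h1, h2, h3, h4⟩ := cfM_pos xs hxs
    have hrec := cfVal_eq xs x hxs
    have hd : (0:ℝ) < ((cfM xs).1 : ℝ) := by exact_mod_cast h1
    have hD : (0:ℝ) < (x:ℝ) * ((cfM xs).1 : ℝ) + ((cfM xs).2.2.1 : ℝ) := by
      have : (1:ℝ) ≤ (x:ℝ) := by exact_mod_cast hx
      have : (0:ℝ) ≤ ((cfM xs).2.2.1 : ℝ) := by exact_mod_cast h3
      nlinarith
    rw [cfVal_cons, hrec]
    simp only [cfM]
    push_cast
    field_simp

lemma cfM_append_one : ∀ l : List ℤ, cfM (l ++ [1]) =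
    ((cfM l).1 + (cfM l).2.1, (cfM l).1, (cfM l).2.2.1 + (cfM l).2.2.2, (cfM l).2.2.1)
  | [] => by simp [cfM]
  | x :: xs => by
    have h := cfM_append_one xs
    simp only [List.cons_append, cfM]
    rw [h]
    exact Prod.ext (by ring) (Prod.ext (by ring) (Prod.ext (by ring) (by ring)))

lemma cfM_cons (x : ℤ) (l : List ℤ) : cfM (x :: l) =
    (x * (cfM l).1 + (cfM l).2.2.1, x * (cfM l).2.1 + (cfM l).2.2.2,
      (cfM l).1, (cfM l).2.1) := rfl

lemma lemD (b : ℕ) : ∀ a : ℕ, 0 < a → a < b → ∀ par : Bool,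
    ∃ l : List ℤ, (∀ x ∈ l, 1 ≤ x) ∧ (l.length % 2 = if par then 1 else 0) ∧
      (cfM l).1 ≤ (b:ℤ) ∧ (cfM l).2.1 < (cfM l).1 ∧ 0 ≤ (cfM l).2.1 ∧
      1 ≤ (cfM l).2.2.1 ∧ (cfM l).2.2.1 ≤ (a:ℤ) ∧ (cfM l).2.2.2 ≤ (cfM l).2.2.1 ∧
      cfVal 0 l = (a:ℝ)/(b:ℝ) := by
  induction b using Nat.strong_induction_on with
  | _ b IH =>
    intro a ha hab par
    set c := b / a with hc_def
    set r := b % a with hr_def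
    have hdm : a * c + r = b := Nat.div_add_mod b a
    have hc1 : 1 ≤ c := (Nat.one_le_div_iff ha).mpr (le_of_lt hab)
    have hr_lt : r < a := Nat.mod_lt _ ha
    have ha0R : (0:ℝ) < (a:ℝ) := by exact_mod_cast ha
    have hb0 : 0 < b := lt_trans ha hab
    have hb0R : (0:ℝ) < (b:ℝ) := by exact_mod_cast hb0
    have hbR : (b:ℝ) = (a:ℝ) * (c:ℝ) + (r:ℝ) := by exact_mod_cast hdm.symm
    by_cases hr0 : r = 0
    · -- base case: a ∣ b, value = 1/c with c ≥ 2
      have hbac : b = a * c := by omega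
      have hcne1 : c ≠ 1 := by
        intro h; rw [h, mul_one] at hbac; omega
      have hc2 : 2 ≤ c := by omega
      have hcb : c ≤ b := by
        calc c ≤ a * c := Nat.le_mul_of_pos_left c ha
          _ = b := hbac.symm
      have hc0R : (0:ℝ) < (c:ℝ) := by positivity
      have hval : (a:ℝ)/(b:ℝ) = 1/(c:ℝ) := by
        rw [hbac]; push_cast
        rw [div_mul_eq_div_div, div_self (ne_of_gt ha0R)]
      cases par
      · -- even : [c-1, 1]
        have hM : cfM [(c:ℤ) - 1, 1] = ((c:ℤ), (c:ℤ) - 1, 1, 1) := by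
          simp [cfM_cons, cfM]
        refine ⟨[(c:ℤ) - 1, 1], ?_, by simp, ?_, ?_, ?_, ?_, ?_, ?_, ?_⟩
        · intro x hx; simp at hx; rcases hx with rfl | rfl <;> omega
        · rw [hM]; dsimp only; exact_mod_cast hcb
        · rw [hM]; dsimp only; omega
        · rw [hM]; dsimp only; omega
        · rw [hM]
        · rw [hM]; dsimp only; exact_mod_cast ha
        · rw [hM]
        · rw [cfVal_cons, cfVal_cons, cfVal_nil, hval]
          have hcR : (2:ℝ) ≤ (c:ℝ) := by exact_mod_cast hc2
          push_cast
          rw [div_self (by norm_num : (1:ℝ) ≠ 0)]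
          field_simp
          rw [zero_add, sub_add_cancel, mul_one_div_cancel (ne_of_gt hc0R)]
      · -- odd : [c]
        have hM : cfM [(c:ℤ)] = ((c:ℤ), 1, 1, 0) := by simp [cfM_cons, cfM]
        refine ⟨[(c:ℤ)], ?_, by simp, ?_, ?_, ?_, ?_, ?_, ?_, ?_⟩
        · intro x hx; simp at hx; omega
        · rw [hM]; dsimp only; exact_mod_cast hcb
        · rw [hM]; dsimp only; omega
        · rw [hM]; dsimp only; omega
        · rw [hM]
        · rw [hM]; dsimp only; exact_mod_cast ha
        · rw [hM]; dsimp only; omega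
        · rw [cfVal_cons, cfVal_nil, hval]; norm_num
    · -- recursive case
      have hr_pos : 0 < r := Nat.pos_of_ne_zero hr0
      obtain ⟨l', hent, hpar, hd, hd', hd'0, hn1, hna, hn'n, hvalue⟩ :=
        IH a hab r hr_pos hr_lt (!par)
      rcases l' with _ | ⟨y, ys⟩
      · exfalso
        rw [cfVal_nil] at hvalue
        have : (0:ℝ) < (r:ℝ)/(a:ℝ) := by
          apply div_pos _ ha0R; exact_mod_cast hr_pos
        rw [← hvalue] at this; norm_num at this
      · have hyent : ∀ z ∈ ys, 1 ≤ z := fun z hz => hent z (by simp [hz])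
        have hy1 : (1:ℤ) ≤ y := hent y (by simp)
        have ht1 : (1:ℝ) ≤ cfVal y ys := cfVal_ge_one ys y hy1 hyent
        have ht0 : (0:ℝ) < cfVal y ys := by linarith
        have hcZ : (1:ℤ) ≤ (c:ℤ) := by exact_mod_cast hc1
        have hM := cfM_cons (c:ℤ) (y :: ys)
        have hpos := cfM_pos _ hent
        refine ⟨(c:ℤ) :: y :: ys, ?_, ?_, ?_, ?_, ?_, ?_, ?_, ?_, ?_⟩
        · intro x hx
          simp only [List.mem_cons] at hx
          rcases hx with rfl | hx
          · omega
          · exact hent x (by simpa using hx)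
        · simp only [List.length_cons] at hpar ⊢
          rcases par with _ | _ <;> simp at hpar ⊢ <;> omega
        · rw [hM]
          dsimp only
          calc (c:ℤ) * (cfM (y::ys)).1 + (cfM (y::ys)).2.2.1 ≤ (c:ℤ) * a + r := by nlinarith
            _ = (b:ℤ) := by push_cast [← hdm]; ring
        · rw [hM]
          dsimp only
          nlinarith [mul_le_mul_of_nonneg_left
            (by omega : (cfM (y::ys)).2.1 + 1 ≤ (cfM (y::ys)).1) (by omega : (0:ℤ) ≤ (c:ℤ))]
        · rw [hM]
          dsimp only
          nlinarith [hpos.2.1, hpos.2.2.2]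
        · rw [hM]
          dsimp only
          exact hpos.1
        · rw [hM]
          dsimp only
          exact hd
        · rw [hM]
          dsimp only
          omega
        · rw [cfVal_cons, cfVal_cons]
          have h1t : 1/cfVal y ys = (r:ℝ)/(a:ℝ) := by
            rw [← hvalue, cfVal_cons]; push_cast; ring
          push_cast
          rw [h1t]
          have hden : (c:ℝ) + (r:ℝ)/(a:ℝ) = ((a:ℝ)*(c:ℝ)+(r:ℝ))/(a:ℝ) := by
            field_simp
          rw [hden, one_div_div, hbR]
          ring


set_option maxHeartbeats 2000000 in
/-- Example 1: the partial sums of `Σ 1/(2^(2ⁿ-1)·A^(2ⁿ))` are convergents of its sum. -/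
theorem example_one (A N : ℕ) (hA : 0 < A) (hN : 0 < N) (α : ℝ)
    (hα : α = ∑' n : ℕ, 1 / ((2 : ℝ) ^ (2 ^ (n + 1) - 1) * (A : ℝ) ^ (2 ^ (n + 1))))
    (p : ℤ) (q : ℕ) (hq : q = 2 ^ (2 ^ N - 1) * A ^ (2 ^ N))
    (hpq : (p : ℝ) / (q : ℝ) =
      ∑ n ∈ Finset.range N, 1 / ((2 : ℝ) ^ (2 ^ (n + 1) - 1) * (A : ℝ) ^ (2 ^ (n + 1)))) :
    Real.IsConvergentOf α ((p : ℝ) / (q : ℝ)) := by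
  obtain ⟨M, rfl⟩ : ∃ M, N = M + 1 := ⟨N - 1, by omega⟩
  set g : ℕ → ℝ := fun n => (2 : ℝ) ^ (2 ^ (n + 1) - 1) * (A : ℝ) ^ (2 ^ (n + 1)) with hg
  set f : ℕ → ℝ := fun n => 1 / g n with hf
  have hA1 : (1:ℝ) ≤ (A:ℝ) := by exact_mod_cast hA
  have hg_ge : ∀ n, (2:ℝ) ^ (n + 1) ≤ g n := by
    intro n
    have h1 : n + 1 ≤ 2 ^ (n + 1) - 1 := by
      have := @Nat.lt_two_pow_self (n + 1)
      omega
    have h2 : (2:ℝ) ^ (n+1) ≤ (2:ℝ) ^ (2 ^ (n + 1) - 1) :=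
      pow_le_pow_right₀ (by norm_num) h1
    have h3 : (1:ℝ) ≤ (A:ℝ) ^ (2 ^ (n + 1)) := one_le_pow₀ hA1
    simp only [hg]
    calc (2:ℝ) ^ (n+1) ≤ (2:ℝ) ^ (2 ^ (n + 1) - 1) := h2
      _ ≤ (2:ℝ) ^ (2 ^ (n + 1) - 1) * (A:ℝ) ^ (2 ^ (n + 1)) :=
          le_mul_of_one_le_right (by positivity) h3
  have hg2 : ∀ n, (2:ℝ) ≤ g n := by
    intro n
    refine le_trans ?_ (hg_ge n)
    calc (2:ℝ) = 2 ^ 1 := by norm_num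
      _ ≤ 2 ^ (n + 1) := pow_le_pow_right₀ (by norm_num) (by omega)
  have hgpos : ∀ n, (0:ℝ) < g n := fun n => lt_of_lt_of_le (by norm_num) (hg2 n)
  have hfpos : ∀ n, (0:ℝ) < f n := fun n => by
    simp only [hf]; positivity
  have hgrec : ∀ n, g (n + 1) = 2 * g n ^ 2 := by
    intro n
    have h2p : (2:ℕ) ^ (n + 2) = 2 ^ (n + 1) * 2 := by rw [pow_succ]
    have h1 : 1 ≤ (2:ℕ) ^ (n + 1) := Nat.one_le_two_pow
    have he : 2 ^ (n + 2) - 1 = 1 + (2 ^ (n + 1) - 1) * 2 := by omega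
    simp only [hg]
    rw [he, pow_add, pow_mul, h2p, pow_mul]
    ring
  have hfle : ∀ n, f n ≤ (1/2 : ℝ) ^ (n + 1) := by
    intro n
    have := hg_ge n
    have h2 : (0:ℝ) < (2:ℝ) ^ (n + 1) := by positivity
    simp only [hf, div_pow, one_pow]
    rw [div_le_div_iff₀ (hgpos n) h2]
    nlinarith
  have hsum : Summable f := by
    refine Summable.of_nonneg_of_le (fun n => le_of_lt (hfpos n)) hfle ?_
    have : Summable (fun n : ℕ => (1/2 : ℝ) ^ n) :=
      summable_geometric_of_lt_one (by norm_num) (by norm_num)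
    exact (summable_nat_add_iff 1).mpr this
  have hq0 : 0 < q := by
    rw [hq]; positivity
  have hqR : (q:ℝ) = g M := by
    rw [hq, hg]; push_cast; norm_num
  have hqR2 : (2:ℝ) ≤ (q:ℝ) := by rw [hqR]; exact hg2 M
  have hqRpos : (0:ℝ) < (q:ℝ) := by linarith
  set v : ℝ := (p:ℝ) / (q:ℝ) with hv
  -- tail
  set T : ℝ := ∑' k, f (k + (M + 1)) with hT
  have hsplit : ∑ i ∈ Finset.range (M+1), f i + T = ∑' i, f i :=
    Summable.sum_add_tsum_nat_add (M+1) hsum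
  have hαvT : α = v + T := by
    rw [hα, ← hsplit, ← hpq]
  have hfN : f (M+1) = 1 / (2 * (q:ℝ)^2) := by
    simp only [hf]
    rw [hgrec M, hqR]
  have hsum1 : Summable (fun k => f (k + (M+1))) := (summable_nat_add_iff (M+1)).mpr hsum
  have hTsplit : T = f (M+1) + ∑' k, f ((k + 1) + (M+1)) := by
    rw [hT, Summable.tsum_eq_zero_add hsum1]
    norm_num
  have hgrow : ∀ k, 8 * (q:ℝ)^4 * 4 ^ k ≤ g (k + (M + 2)) := by
    intro k
    induction k with
    | zero =>
      have : g (M + 2) = 8 * (q:ℝ)^4 := by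
        rw [hgrec (M+1), hgrec M, ← hqR]; ring
      simp [this]
    | succ k ih =>
      have h2 : g ((k + (M+2)) + 1) = 2 * g (k + (M+2)) ^ 2 := hgrec _
      have h3 : (2:ℝ) ≤ g (k + (M+2)) := hg2 _
      have h4 : (0:ℝ) < 8 * (q:ℝ)^4 * 4 ^ k := by positivity
      have : (k + 1) + (M + 2) = (k + (M+2)) + 1 := by omega
      rw [this, h2]
      calc 8 * (q:ℝ)^4 * 4 ^ (k+1) = (8 * (q:ℝ)^4 * 4 ^ k) * 4 := by ring
        _ ≤ g (k + (M+2)) * 4 := by nlinarith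
        _ ≤ 2 * g (k + (M+2)) ^ 2 := by nlinarith
  have htail2 : ∑' k, f ((k + 1) + (M+1)) ≤ 1 / (6 * (q:ℝ)^4) := by
    have hle : ∀ k, f ((k + 1) + (M+1)) ≤ (1 / (8 * (q:ℝ)^4)) * (1/4) ^ k := by
      intro k
      have h1 : (k + 1) + (M + 1) = k + (M + 2) := by omega
      rw [h1]
      have h2 := hgrow k
      have h3 := hgpos (k + (M+2))
      have h4 : (0:ℝ) < 8 * (q:ℝ)^4 * 4 ^ k := by positivity
      simp only [hf]
      rw [div_le_iff₀ h3]
      have he : (1 / (8 * (q:ℝ)^4)) * (1/4) ^ k * (8 * (q:ℝ)^4 * 4 ^ k) = 1 := by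
        field_simp
        rw [← mul_pow]; norm_num
      calc (1:ℝ) = (1 / (8 * (q:ℝ)^4)) * (1/4) ^ k * (8 * (q:ℝ)^4 * 4 ^ k) := he.symm
        _ ≤ (1 / (8 * (q:ℝ)^4)) * (1/4) ^ k * g (k + (M+2)) := by
            have h5 : (0:ℝ) ≤ (1 / (8 * (q:ℝ)^4)) * (1/4) ^ k := by positivity
            nlinarith
    have hsumg : Summable (fun k : ℕ => (1 / (8 * (q:ℝ)^4)) * (1/4) ^ k) :=
      (summable_geometric_of_lt_one (by norm_num) (by norm_num)).mul_left _
    have hsum2 : Summable (fun k => f ((k + 1) + (M+1))) := by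
      have : Summable (fun k => f (k + (M + 2))) := (summable_nat_add_iff (M+2)).mpr hsum
      refine this.congr fun k => by congr 1; omega
    calc ∑' k, f ((k + 1) + (M+1)) ≤ ∑' k : ℕ, (1 / (8 * (q:ℝ)^4)) * (1/4) ^ k :=
          Summable.tsum_le_tsum hle hsum2 hsumg
      _ = (1 / (8 * (q:ℝ)^4)) * ∑' k : ℕ, ((1:ℝ)/4) ^ k := tsum_mul_left
      _ = (1 / (8 * (q:ℝ)^4)) * (1 - 1/4)⁻¹ := by
          rw [tsum_geometric_of_lt_one (by norm_num) (by norm_num)]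
      _ = 1 / (6 * (q:ℝ)^4) := by
          rw [show ((1:ℝ) - 1/4)⁻¹ = 4/3 by norm_num]
          have hq4 : (0:ℝ) < (q:ℝ)^4 := by positivity
          field_simp
          ring
  have hTub : T ≤ 1 / (2 * (q:ℝ)^2) + 1 / (6 * (q:ℝ)^4) := by
    rw [hTsplit, hfN]
    linarith [htail2]
  have hTlb : 1 / (2 * (q:ℝ)^2) ≤ T := by
    rw [hTsplit, hfN]
    have : 0 ≤ ∑' k, f ((k + 1) + (M+1)) := tsum_nonneg (fun k => le_of_lt (hfpos _))
    linarith
  have hTpos : 0 < T := lt_of_lt_of_le (by positivity) hTlb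
  -- 0 < v < 1
  have hvpos : 0 < v := by
    rw [hpq]
    apply Finset.sum_pos
    · intro i _
      exact hfpos i
    · exact ⟨0, Finset.mem_range.mpr (by omega)⟩
  have hgeom : ∀ K : ℕ, ∑ n ∈ Finset.range K, (1/2 : ℝ) ^ (n+1) = 1 - (1/2) ^ K := by
    intro K
    induction K with
    | zero => simp
    | succ K ih => rw [Finset.sum_range_succ, ih]; ring
  have hvlt1 : v < 1 := by
    rw [hpq]
    calc ∑ n ∈ Finset.range (M+1), f n ≤ ∑ n ∈ Finset.range (M+1), (1/2:ℝ)^(n+1) :=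
          Finset.sum_le_sum (fun i _ => hfle i)
      _ = 1 - (1/2)^(M+1) := hgeom (M+1)
      _ < 1 := by
          have : (0:ℝ) < (1/2)^(M+1) := by positivity
          linarith
  have hp0 : 0 < p := by
    by_contra h
    push_neg at h
    have : (p:ℝ) ≤ 0 := by exact_mod_cast h
    have : v ≤ 0 := by
      rw [hv]
      exact div_nonpos_of_nonpos_of_nonneg this (le_of_lt hqRpos)
    linarith
  have hpq' : p < (q:ℤ) := by
    by_contra h
    push_neg at h
    have : (q:ℝ) ≤ (p:ℝ) := by exact_mod_cast h
    have : 1 ≤ v := by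
      rw [hv, le_div_iff₀ hqRpos]; linarith
    linarith
  -- continued fraction of v
  have hptn : 0 < p.toNat := by omega
  have hptq : p.toNat < q := by omega
  obtain ⟨l, hent, hlen, hdq, hd'd, hd'0, hn1, hna, hn'n, hval⟩ := lemD q p.toNat hptn hptq false
  have hvalv : cfVal 0 l = v := by
    rw [hval, hv]
    have : ((p.toNat : ℕ) : ℝ) = (p : ℝ) := by
      exact_mod_cast congrArg (Int.cast : ℤ → ℝ) (Int.toNat_of_nonneg (by omega : (0:ℤ) ≤ p))
    rw [this]
  simp only [if_neg (by simp : ¬ false = true)] at hlen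
  have heven : Even l.length := Nat.even_iff.mpr hlen
  have hdet : (cfM l).1 * (cfM l).2.2.2 - (cfM l).2.1 * (cfM l).2.2.1 = 1 := by
    have h := cfM_det l
    rwa [heven.neg_one_pow] at h
  have hentapp : ∀ x ∈ l ++ [(1:ℤ)], 1 ≤ x := by
    intro x hx
    rcases List.mem_append.mp hx with h | h
    · exact hent x h
    · simp at h; omega
  set d := (cfM l).1 with hd_def
  set d' := (cfM l).2.1 with hd'_def
  set n := (cfM l).2.2.1 with hn_def
  set n' := (cfM l).2.2.2 with hn'_def
  have hdR1 : (1:ℝ) ≤ (d:ℝ) := by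
    have : (1:ℤ) ≤ d := (cfM_pos l hent).1
    exact_mod_cast this
  have hd'R0 : (0:ℝ) ≤ (d':ℝ) := by exact_mod_cast hd'0
  have hd'Rd : (d':ℝ) + 1 ≤ (d:ℝ) := by
    exact_mod_cast (by omega : d' + 1 ≤ d)
  have hdRq : (d:ℝ) ≤ (q:ℝ) := by
    have h : ((d:ℤ):ℝ) ≤ (((q:ℕ):ℤ):ℝ) := Int.cast_le.mpr hdq
    push_cast at h
    exact h
  have hBpos : (0:ℝ) < (d:ℝ) * ((d:ℝ) + (d':ℝ)) :=
    mul_pos (by linarith) (by linarith)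
  have hval1 : cfVal 0 l = (n:ℝ)/(d:ℝ) := by
    rw [cfVal_eq l 0 hent, ← hd_def, ← hn_def]
    push_cast
    ring_nf
  have happ := cfM_append_one l
  have hval2 : cfVal 0 (l ++ [1]) = ((n:ℝ) + (n':ℝ))/((d:ℝ) + (d':ℝ)) := by
    rw [cfVal_eq (l ++ [1]) 0 hentapp, happ]
    dsimp only
    rw [← hd_def, ← hd'_def, ← hn_def, ← hn'_def]
    push_cast
    ring_nf
  have hdetR : (d:ℝ) * (n':ℝ) - (d':ℝ) * (n:ℝ) = 1 := by exact_mod_cast hdet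
  have hdne : (d:ℝ) ≠ 0 := by linarith
  have hddne : (d:ℝ) + (d':ℝ) ≠ 0 := by linarith
  have hdiff : cfVal 0 (l ++ [1]) = v + 1/((d:ℝ) * ((d:ℝ) + (d':ℝ))) := by
    rw [hval2, ← hvalv, hval1]
    field_simp
    linear_combination hdetR
  -- the tail bound
  have hBle : (d:ℝ) * ((d:ℝ) + (d':ℝ)) ≤ 2*(q:ℝ)^2 - (q:ℝ) := by
    have h1 : (d:ℝ) + (d':ℝ) ≤ 2*(q:ℝ) - 1 := by linarith
    calc (d:ℝ) * ((d:ℝ) + (d':ℝ)) ≤ (q:ℝ) * (2*(q:ℝ) - 1) :=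
          mul_le_mul hdRq h1 (by linarith) (by linarith)
      _ = 2*(q:ℝ)^2 - (q:ℝ) := by ring
  have h2q : (0:ℝ) < 2*(q:ℝ)^2 - (q:ℝ) := by
    rw [show 2*(q:ℝ)^2 - (q:ℝ) = (q:ℝ)*(2*(q:ℝ)-1) by ring]
    exact mul_pos hqRpos (by linarith)
  have hkey : 1/(2*(q:ℝ)^2) + 1/(6*(q:ℝ)^4) < 1/(2*(q:ℝ)^2 - (q:ℝ)) := by
    have hL : 1/(2*(q:ℝ)^2) + 1/(6*(q:ℝ)^4) = (3*(q:ℝ)^2 + 1)/(6*(q:ℝ)^4) := by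
      field_simp
      ring
    rw [hL, div_lt_div_iff₀ (by positivity) h2q]
    nlinarith [hqRpos, hqR2, mul_pos hqRpos hqRpos, mul_pos (mul_pos hqRpos hqRpos) hqRpos]
  have hTub2 : T < 1/((d:ℝ) * ((d:ℝ) + (d':ℝ))) := by
    calc T ≤ 1 / (2 * (q:ℝ)^2) + 1 / (6 * (q:ℝ)^4) := hTub
      _ < 1/(2*(q:ℝ)^2 - (q:ℝ)) := hkey
      _ ≤ 1/((d:ℝ) * ((d:ℝ) + (d':ℝ))) := one_div_le_one_div_of_le hBpos hBle
  have hmain := lemC l 0 α hent (Or.inl ⟨?_, ?_⟩)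
  · exact ⟨l.length, by rw [hmain, hvalv]⟩
  · rw [hvalv, hαvT]; linarith
  · rw [hdiff, hαvT]; linarith
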